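/- arXiv:2006.16880 — 2 statements merged into one kernel-verified Lean document; each statement's English description precedes it below -/
import Mathlib

section
/- Suppose X₁, X₂, X₃, A, B, C are smooth functions on a neighborhood of 0 in ℝ³ all vanishing at the origin, satisfying the system X₁B − X₂A = z, X₁C − X₃A = −y, −X₃B − X₂C = −x on that neighborhood. Then a contradiction follows; i.e., no such functions exist. -/
theorem stmt6 (X₁ X₂ X₃ A B C : (Fin 3 → ℝ) → ℝ)
    (hX₁ : ContDiff ℝ (⊤ : ℕ∞) X₁) (hX₂ : ContDiff ℝ (⊤ : ℕ∞) X₂) (hX₃ : ContDiff ℝ (⊤ : ℕ∞) X₃)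
    (hA : ContDiff ℝ (⊤ : ℕ∞) A) (hB : ContDiff ℝ (⊤ : ℕ∞) B) (hC : ContDiff ℝ (⊤ : ℕ∞) C)
    (hX₁0 : X₁ 0 = 0) (hX₂0 : X₂ 0 = 0) (hX₃0 : X₃ 0 = 0)
    (hA0 : A 0 = 0) (hB0 : B 0 = 0) (hC0 : C 0 = 0)
    (U : Set (Fin 3 → ℝ)) (hU : U ∈ nhds (0 : Fin 3 → ℝ))
    (heq : ∀ v ∈ U,
      X₁ v * B v - X₂ v * A v = v 2 ∧
      X₁ v * C v - X₃ v * A v = -(v 1) ∧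
      -(X₃ v * B v) - X₂ v * C v = -(v 0)) : False := by
  have h3 := (hX₃.differentiable (by simp) 0).hasFDerivAt
  have hb := (hB.differentiable (by simp) 0).hasFDerivAt
  have h2 := (hX₂.differentiable (by simp) 0).hasFDerivAt
  have hc := (hC.differentiable (by simp) 0).hasFDerivAt
  have hg : HasFDerivAt (fun v => X₃ v * B v + X₂ v * C v)
      (0 : (Fin 3 → ℝ) →L[ℝ] ℝ) 0 := by
    have := (h3.mul hb).add (h2.mul hc)
    simp [hX₃0, hB0, hX₂0, hC0] at this
    exact this
  have hproj : HasFDerivAt (fun v : Fin 3 → ℝ => v 0)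
      (ContinuousLinearMap.proj 0 : (Fin 3 → ℝ) →L[ℝ] ℝ) 0 :=
    (ContinuousLinearMap.proj 0 : (Fin 3 → ℝ) →L[ℝ] ℝ).hasFDerivAt
  have heqf : (fun v : Fin 3 → ℝ => v 0) =ᶠ[nhds 0]
      (fun v => X₃ v * B v + X₂ v * C v) := by
    filter_upwards [hU] with v hv
    have := (heq v hv).2.2
    linarith
  have hproj' : HasFDerivAt (fun v : Fin 3 → ℝ => v 0)
      (0 : (Fin 3 → ℝ) →L[ℝ] ℝ) 0 := hg.congr_of_eventuallyEq heqf
  have h0 := hproj'.unique hproj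
  have := congrArg (fun L : (Fin 3 → ℝ) →L[ℝ] ℝ => L (Pi.single 0 1)) h0
  simp at this
end

section
/- If X is a vector field and α a 1-form on a 3-manifold with ι_X dα = −dB, and Y is any vector field with ι_Y μ = dα for a volume form μ, then Y(B) = 0, i.e., B is also a first integral of the vorticity Y. -/
/-- Pointwise multilinear form of: if ι_X dα = −dB and ι_Y μ = dα
(μ a 3-form, dα a 2-form) then dB(Y) = 0. -/
theorem stmt7 (V : Type*) [AddCommGroup V] [Module ℝ V]
    (μ : AlternatingMap ℝ V ℝ (Fin 3)) (η : AlternatingMap ℝ V ℝ (Fin 2))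
    (db : V →ₗ[ℝ] ℝ) (X Y : V)
    (h1 : ∀ v : V, η ![X, v] = - db v)
    (h2 : ∀ u v : V, μ ![Y, u, v] = η ![u, v]) :
    db Y = 0 := by
  have h3 : η ![X, Y] = 0 := by
    rw [← h2 X Y]
    exact μ.map_eq_zero_of_eq ![Y, X, Y] (by simp) (i := 0) (j := 2) (by decide)
  have := h1 Y
  rw [h3] at this
  linarith
end
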